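/- Equivalence of path-specific counterfactuals and extended-model counterfactuals: let a functional causal model p over a causal DAG G(V) be given, with treatment set A ⊆ V, values a, a', and a set π of proper causal paths out of A, and let p^e be the corresponding extended functional causal model over the extended DAG G^e(V ∪ A^Ch). Then: (i) the observed distributions agree, p(V) = p^e(V); and (ii) if V(π,a,a') is edge consistent, then for every Y ⊆ V \ A the distribution of Y(π,a,a') under p equals the distribution of Y(a^π) under p^e. -/

import Mathlib

/-! ### Mixed graphs, walks, m-separation, SWIGs -/

/-- An acyclic directed mixed graph (directedness data; acyclicity is stated separately). -/
structure MixedGraph (V : Type) where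
  /-- directed edges `i → j` -/
  dir : V → V → Prop
  /-- bidirected edges `i ↔ j` -/
  bi : V → V → Prop
  bi_symm : ∀ i j, bi i j → bi j i

namespace MixedGraph

variable {V : Type}

/-- There is no directed cycle. -/
def Acyclic (G : MixedGraph V) : Prop := ∀ v, ¬ Relation.TransGen G.dir v v

/-- `v` is a descendant of `s` (reflexively). -/
def Desc (G : MixedGraph V) (s v : V) : Prop := Relation.ReflTransGen G.dir s v

/-- The set of ancestors of the set `W` (including `W` itself). -/
def AncSet (G : MixedGraph V) (W : Set V) : Set V := {v | ∃ w ∈ W, Relation.ReflTransGen G.dir v w}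

/-- There is an edge between `a` and `b` carrying an arrowhead at `a` iff `ha = true`
and an arrowhead at `b` iff `hb = true`. -/
def Step (G : MixedGraph V) (a b : V) (ha hb : Bool) : Prop :=
  match ha, hb with
  | false, true => G.dir a b
  | true, false => G.dir b a
  | true, true => G.bi a b
  | false, false => False

/-- Walks (with at least one edge) in a mixed graph, remembering arrowhead marks. -/
inductive Walk (G : MixedGraph V) : V → V → Type where
  | single {a b : V} (ha hb : Bool) (h : G.Step a b ha hb) : Walk G a b
  | cons {a b c : V} (ha hb : Bool) (h : G.Step a b ha hb) (w : Walk G b c) : Walk G a c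

/-- The arrowhead mark at the first vertex of a walk. -/
def Walk.firstArrow {G : MixedGraph V} : ∀ {x y : V}, Walk G x y → Bool
  | _, _, .single ha _ _ => ha
  | _, _, .cons ha _ _ _ => ha

/-- The list of vertices visited by a walk. -/
def Walk.support {G : MixedGraph V} : ∀ {x y : V}, Walk G x y → List V
  | x, y, .single _ _ _ => [x, y]
  | x, _, .cons _ _ _ w => x :: w.support

/-- A walk is a path if it has no repeated vertices. -/
def Walk.IsPath {G : MixedGraph V} {x y : V} (w : Walk G x y) : Prop := w.support.Nodup

/-- A walk is blocked by the set `C` if some intermediate vertex of it is a non-collider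
belonging to `C`, or a collider without descendants in `C`. -/
def Walk.Blocked (G : MixedGraph V) (C : Set V) : ∀ {x y : V}, Walk G x y → Prop
  | _, _, .single _ _ _ => False
  | _, _, .cons (b := b) _ hb _ w =>
      (if hb = true ∧ w.firstArrow = true then ∀ d, G.Desc b d → d ∉ C else b ∈ C)
        ∨ Walk.Blocked G C w

/-- The intermediate (non-endpoint) vertices of a walk. -/
def Walk.inner {G : MixedGraph V} : ∀ {x y : V}, Walk G x y → List V
  | _, _, .single _ _ _ => []
  | _, _, .cons (b := b) _ _ _ w => b :: w.inner

/-- m-separation relative to a set `R`: every path from `Y` to `Z` all of whose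
non-endpoint vertices lie in `R` is blocked by `C`.  (In a SWIG, `R` is taken to be the
set of random vertices.) -/
def MSepIn (G : MixedGraph V) (R : Set V) (Y Z C : Set V) : Prop :=
  ∀ y ∈ Y, ∀ z ∈ Z, ∀ w : G.Walk y z, w.IsPath → (∀ v ∈ w.inner, v ∈ R) →
    Walk.Blocked G C w

/-- m-separation: every path from `Y` to `Z` is blocked by `C`. -/
def MSep (G : MixedGraph V) (Y Z C : Set V) : Prop :=
  MSepIn G Set.univ Y Z C

/-- The single world intervention graph obtained by splitting every vertex in `A`
into a random half `Sum.inl` (inheriting all edges with an arrowhead at it) and a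
fixed half `Sum.inr` (inheriting all outgoing directed edges).  Vertices `Sum.inl i`
are the random vertices; vertices `Sum.inr i` for `i ∈ A` are the fixed vertices
(`Sum.inr i` for `i ∉ A` is an isolated junk vertex). -/
def swig (G : MixedGraph V) (A : Set V) : MixedGraph (V ⊕ V) where
  dir x y :=
    match x, y with
    | Sum.inl i, Sum.inl j => G.dir i j ∧ i ∉ A
    | Sum.inr i, Sum.inl j => G.dir i j ∧ i ∈ A
    | _, _ => False
  bi x y :=
    match x, y with
    | Sum.inl i, Sum.inl j => G.bi i j
    | _, _ => False
  bi_symm := by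
    rintro (i | i) (j | j) h
    · exact G.bi_symm i j h
    · exact False.elim h
    · exact False.elim h
    · exact False.elim h

/-- `G` with all edges carrying an arrowhead at a vertex of `X` removed (Pearl's `G_{X̄}`). -/
def removeInto (G : MixedGraph V) (X : Set V) : MixedGraph V where
  dir i j := G.dir i j ∧ j ∉ X
  bi i j := G.bi i j ∧ i ∉ X ∧ j ∉ X
  bi_symm := fun i j h => ⟨G.bi_symm i j h.1, h.2.2, h.2.1⟩

/-- `G` with all directed edges out of a vertex of `Z` removed (Pearl's `G_{Z̲}`). -/
def removeOut (G : MixedGraph V) (Z : Set V) : MixedGraph V where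
  dir i j := G.dir i j ∧ i ∉ Z
  bi := G.bi
  bi_symm := G.bi_symm

end MixedGraph

/-! ### Structural causal models over the index set `K = {1, …, k}` (as `Fin k`) -/

/-- A (recursive) structural causal model over the index set `Fin k`: each variable `i` has a
finite nonempty state space `X i`, a set of parents `pa i ⊆ {0, …, i-1}`, an exogenous noise
space `E i` and a structural function `f i`. -/
structure SCM (k : ℕ) where
  X : Fin k → Type
  finX : ∀ i, Fintype (X i)
  neX : ∀ i, Nonempty (X i)
  E : Fin k → Type
  pa : Fin k → Set (Fin k)
  pa_lt : ∀ i j, j ∈ pa i → j < i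
  f : ∀ i, (∀ j ∈ pa i, X j) → E i → X i

open Classical in
/-- The potential outcome `V_i(a)(ε)` under the intervention setting `A` to `a`,
defined by recursive substitution. -/
noncomputable def SCM.po {k : ℕ} (M : SCM k) (A : Set (Fin k)) (a : ∀ j ∈ A, M.X j)
    (ε : ∀ i, M.E i) : (i : Fin k) → M.X i
  | i => M.f i (fun j hj => if h : j ∈ A then a j h else M.po A a ε j) (ε i)
termination_by i => (i : ℕ)
decreasing_by exact M.pa_lt i j hj

/-- The causal DAG associated with a structural causal model: `j → i` iff `j ∈ pa i`. -/
def SCM.graph {k : ℕ} (M : SCM k) : MixedGraph (Fin k) where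
  dir i j := i ∈ M.pa j
  bi _ _ := False
  bi_symm := fun _ _ h => False.elim h

open Classical in
/-- Combination of two value assignments on `A` and on `B` into one on `A ∪ B`
(with the value from `A` taking precedence). -/
noncomputable def SCM.combine {k : ℕ} (M : SCM k) {A B : Set (Fin k)}
    (a : ∀ j ∈ A, M.X j) (b : ∀ j ∈ B, M.X j) : ∀ j ∈ A ∪ B, M.X j :=
  fun j hj => if h : j ∈ A then a j h else b j (((Set.mem_union j A B).mp hj).resolve_left h)

/-! ### Functional causal models: an SCM together with mutually independent noises -/

/-- A functional causal model (NPSEM-IE): a structural causal model together with a probability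
space and mutually independent exogenous noise variables `ε_1, …, ε_k`. -/
structure FCM (k : ℕ) extends SCM k where
  Ω : Type
  [mΩ : MeasurableSpace Ω]
  μ : MeasureTheory.Measure Ω
  isProb : MeasureTheory.IsProbabilityMeasure μ
  [mE : ∀ i, MeasurableSpace (E i)]
  e : ∀ i, Ω → E i
  e_meas : ∀ i, Measurable (e i)
  indep : ProbabilityTheory.iIndepFun (m := mE) e μ

attribute [instance] FCM.mΩ FCM.mE

/-- The potential outcome random variables `V_i(a)` of a functional causal model. -/
noncomputable def FCM.PO {k : ℕ} (F : FCM k) (A : Set (Fin k)) (a : ∀ j ∈ A, F.X j)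
    (ω : F.Ω) : ∀ i, F.X i :=
  F.toSCM.po A a (fun i => F.e i ω)

/-- The event `{S(a) = s}`, i.e. that the potential outcomes `V_i(a)` for `i ∈ S` take the
values prescribed by `s`. -/
def FCM.Ev {k : ℕ} (F : FCM k) (A : Set (Fin k)) (a : ∀ j ∈ A, F.X j) (S : Set (Fin k))
    (s : ∀ i ∈ S, F.X i) : Set F.Ω :=
  {ω | ∀ i (h : i ∈ S), F.PO A a ω i = s i h}

/-! ### Path-specific potential outcomes and the extended model -/

/-- Index type of the extended model: `Sum.inl i` is the original variable `V_i`, and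
`Sum.inr (i, j)` is the copy vertex `A_i^j` sitting on the edge `i → j`. -/
abbrev EIdx (k : ℕ) := Fin k ⊕ (Fin k × Fin k)

/-- A recursive structural causal model over an arbitrary index set, recursion being
well-founded thanks to the rank function `rk`. -/
structure GSCM (ι : Type) where
  X : ι → Type
  finX : ∀ i, Fintype (X i)
  neX : ∀ i, Nonempty (X i)
  E : ι → Type
  rk : ι → ℕ
  pa : ι → Set ι
  pa_lt : ∀ i j, j ∈ pa i → rk j < rk i
  f : ∀ i, (∀ j ∈ pa i, X j) → E i → X i

open Classical in
/-- Potential outcomes of a `GSCM`, by recursive substitution. -/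
noncomputable def GSCM.po {ι : Type} (M : GSCM ι) (A : Set ι) (a : ∀ j ∈ A, M.X j)
    (ε : ∀ i, M.E i) : (i : ι) → M.X i
  | i => M.f i (fun j hj => if h : j ∈ A then a j h else M.po A a ε j) (ε i)
termination_by i => M.rk i
decreasing_by exact M.pa_lt i j hj

/-- The empty intervention (for an `SCM`). -/
def SCM.noAssign {k : ℕ} (M : SCM k) : ∀ j ∈ (∅ : Set (Fin k)), M.X j :=
  fun j hj => absurd hj (Set.notMem_empty j)

/-- The empty intervention (for a `GSCM`). -/
def GSCM.noAssign {ι : Type} (M : GSCM ι) : ∀ j ∈ (∅ : Set ι), M.X j :=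
  fun j hj => absurd hj (Set.notMem_empty j)

/-- The edge `i → j` lies on one of the paths in `π` (paths being recorded as lists of
vertices). -/
def πEdges {k : ℕ} (π : Set (List (Fin k))) : Fin k → Fin k → Prop :=
  fun i j => ∃ p ∈ π, ∃ l : ℕ, p[l]? = some i ∧ p[l + 1]? = some j

/-- `p` is a proper causal path out of `A`: a directed path of length at least one whose
source is in `A` and which intersects `A` only at the source. -/
def SCM.ProperPath {k : ℕ} (M : SCM k) (A : Set (Fin k)) (p : List (Fin k)) : Prop :=
  2 ≤ p.length ∧ List.Chain' (fun u v => u ∈ M.pa v) p ∧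
    (∃ a0 ∈ A, p.head? = some a0) ∧ ∀ v ∈ p.tail, v ∉ A

open Classical in
/-- The path-specific potential outcome `V_i(π, a, a')(ε)`: `A` is set to `a` for the
purposes of the paths in `π` (encoded by their edge relation `πE`) and to `a'` for the
purposes of all other proper causal paths. -/
noncomputable def SCM.pse {k : ℕ} (M : SCM k) (A : Set (Fin k)) (a a' : ∀ j ∈ A, M.X j)
    (πE : Fin k → Fin k → Prop) (ε : ∀ i, M.E i) : (i : Fin k) → M.X i
  | i =>
    if hA : i ∈ A then a i hA
    else M.f i (fun j hj =>
      if πE j i then (if h : j ∈ A then a j h else M.pse A a a' πE ε j)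
      else (if h : j ∈ A then a' j h else M.po A a' ε j)) (ε i)
termination_by i => (i : ℕ)
decreasing_by exact M.pa_lt i j hj

/-- `V(π, a, a')` is edge consistent: no vertex `j` receives its `A`-parent `k0` set to the
value `a_{k0}` (through a `π`-edge in the path-specific recursion) while its counterfactual
`V_j(a')` also occurs among the nested counterfactuals of `V(π, a, a')` (which would give
`j` the value `a'_{k0}` for that same parent). -/
def SCM.EdgeConsistent {k : ℕ} (M : SCM k) (A : Set (Fin k))
    (πE : Fin k → Fin k → Prop) : Prop :=
  ∀ k0 j, k0 ∈ A → j ∉ A → k0 ∈ M.pa j → πE k0 j →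
    ¬ ∃ u w, u ∉ A ∧ w ∉ A ∧ u ∈ M.pa w ∧ ¬ πE u w ∧
        Relation.ReflTransGen (fun s t => s ∈ M.pa t ∧ t ∉ A) j u

/-- The set of copy vertices `A_i^j` of the extended model: one for each edge `i → j`
with `i ∈ A`. -/
def SCM.copySet {k : ℕ} (M : SCM k) (A : Set (Fin k)) : Set (EIdx k) :=
  {x | ∃ p : Fin k × Fin k, x = Sum.inr p ∧ p.1 ∈ A ∧ p.1 ∈ M.pa p.2}

open Classical in
/-- The extended structural causal model `G^e` associated with `M` and the treatment set
`A`: each edge `i → j` with `i ∈ A` is subdivided by a copy vertex `A_i^j` which is a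
deterministic copy of `A_i`, and the dependence of `V_j` on `A_i` is routed through
`A_i^j`; all other mechanisms are unchanged. -/
noncomputable def SCM.ext {k : ℕ} (M : SCM k) (A : Set (Fin k)) : GSCM (EIdx k) where
  X := Sum.elim M.X (fun p => M.X p.1)
  finX := fun x => match x with
    | Sum.inl i => M.finX i
    | Sum.inr p => M.finX p.1
  neX := fun x => match x with
    | Sum.inl i => M.neX i
    | Sum.inr p => M.neX p.1
  E := Sum.elim M.E (fun _ => PUnit)
  rk := Sum.elim (fun i => 2 * (i : ℕ) + 1) (fun p => 2 * (p.1 : ℕ) + 2)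
  pa := fun x => match x with
    | Sum.inl j => {y | (∃ m, y = Sum.inl m ∧ m ∈ M.pa j ∧ m ∉ A) ∨
                        (∃ m, y = Sum.inr (m, j) ∧ m ∈ M.pa j ∧ m ∈ A)}
    | Sum.inr p => {y | y = Sum.inl p.1 ∧ p.1 ∈ A ∧ p.1 ∈ M.pa p.2}
  pa_lt := by
    rintro (j | p) y hy
    · rcases hy with ⟨m, rfl, hm, -⟩ | ⟨m, rfl, hm, -⟩ <;>
      · have h2 : (m : ℕ) < (j : ℕ) := M.pa_lt j m hm
        simp only [Sum.elim_inl, Sum.elim_inr]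
        omega
    · obtain ⟨rfl, -, -⟩ := hy
      simp only [Sum.elim_inl, Sum.elim_inr]
      omega
  f := fun x => match x with
    | Sum.inl j => fun g e =>
        M.f j (fun m hm =>
          if h : m ∈ A then g (Sum.inr (m, j)) (Or.inr ⟨m, rfl, hm, h⟩)
          else g (Sum.inl m) (Or.inl ⟨m, rfl, hm, h⟩)) e
    | Sum.inr p => fun g _ =>
        if h : p.1 ∈ A ∧ p.1 ∈ M.pa p.2 then g (Sum.inl p.1) ⟨rfl, h.1, h.2⟩
        else Classical.choice (M.neX p.1)

open Classical in
/-- The assignment `a^π` of values to the copy vertices: `A_i^j` receives `a_i` if the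
edge `i → j` lies on a path of `π`, and `a'_i` otherwise. -/
noncomputable def SCM.apiVal {k : ℕ} (M : SCM k) (A : Set (Fin k))
    (a a' : ∀ j ∈ A, M.X j) (πE : Fin k → Fin k → Prop) :
    ∀ x ∈ M.copySet A, (M.ext A).X x :=
  fun x => match x with
    | Sum.inl _ => fun hx =>
        False.elim (by obtain ⟨p, hp, -, -⟩ := hx; cases hp)
    | Sum.inr p => fun hx =>
        have hA : p.1 ∈ A := by
          obtain ⟨q, hq, h1, -⟩ := hx; injection hq with hq'; subst hq'; exact h1
        if πE p.1 p.2 then a p.1 hA else a' p.1 hA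

/-- The noise vector of the extended model determined by `ω`: the original noises for the
original variables, and the trivial noise for the (deterministic) copy vertices. -/
noncomputable def FCM.extNoise {k : ℕ} (F : FCM k) (A : Set (Fin k)) (ω : F.Ω) :
    ∀ x : EIdx k, (F.toSCM.ext A).E x :=
  fun x => match x with
    | Sum.inl i => F.e i ω
    | Sum.inr _ => PUnit.unit


/-! ### Auxiliary lemmas for the proof -/

open Classical in
theorem SCM.ext_f_inl {k : ℕ} (M : SCM k) (A : Set (Fin k)) (j : Fin k)
    (g : ∀ y ∈ (M.ext A).pa (Sum.inl j), (M.ext A).X y) (e : (M.ext A).E (Sum.inl j)) :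
    (M.ext A).f (Sum.inl j) g e =
      M.f j (fun m hm =>
        if h : m ∈ A then g (Sum.inr (m, j)) (Or.inr ⟨m, rfl, hm, h⟩)
        else g (Sum.inl m) (Or.inl ⟨m, rfl, hm, h⟩)) e := rfl

open Classical in
theorem SCM.ext_f_inr {k : ℕ} (M : SCM k) (A : Set (Fin k)) (p : Fin k × Fin k)
    (g : ∀ y ∈ (M.ext A).pa (Sum.inr p), (M.ext A).X y) (e : (M.ext A).E (Sum.inr p)) :
    (M.ext A).f (Sum.inr p) g e =
      (if h : p.1 ∈ A ∧ p.1 ∈ M.pa p.2 then g (Sum.inl p.1) ⟨rfl, h.1, h.2⟩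
       else Classical.choice (M.neX p.1)) := rfl

theorem SCM.inl_not_copySet {k : ℕ} (M : SCM k) (A : Set (Fin k)) (m : Fin k) :
    (Sum.inl m : EIdx k) ∉ M.copySet A := by
  rintro ⟨p, hp, -⟩; cases hp

open Classical in
theorem SCM.ext_po_obs {k : ℕ} (M : SCM k) (ε : ∀ i, M.E i) (A : Set (Fin k))
    (εe : ∀ x : EIdx k, (M.ext A).E x) (hε : ∀ i, εe (Sum.inl i) = ε i) :
    ∀ n : ℕ, ∀ i : Fin k, (i : ℕ) < n →
      (M.ext A).po ∅ (M.ext A).noAssign εe (Sum.inl i) = M.po ∅ M.noAssign ε i := by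
  intro n
  induction n with
  | zero => intro i hi; omega
  | succ n ih =>
    intro i hi
    rw [GSCM.po, SCM.po, SCM.ext_f_inl, hε]
    congr 1
    funext m hm
    have hmn : (m : ℕ) < n := lt_of_lt_of_le (M.pa_lt i m hm) (Nat.lt_succ_iff.mp hi)
    rw [dif_neg (Set.notMem_empty m)]
    by_cases hA : m ∈ A
    · erw [dif_pos hA, dif_neg (Set.notMem_empty _), GSCM.po, SCM.ext_f_inr,
        dif_pos ⟨hA, hm⟩, dif_neg (Set.notMem_empty _)]
      exact ih m hmn
    · erw [dif_neg hA, dif_neg (Set.notMem_empty _)]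
      exact ih m hmn

open Classical in
theorem SCM.ext_po_pse {k : ℕ} (M : SCM k) (A : Set (Fin k)) (a a' : ∀ j ∈ A, M.X j)
    (πE : Fin k → Fin k → Prop) (ε : ∀ i, M.E i)
    (εe : ∀ x : EIdx k, (M.ext A).E x) (hε : ∀ i, εe (Sum.inl i) = ε i)
    (hec : M.EdgeConsistent A πE) :
    ∀ n : ℕ, ∀ i : Fin k, (i : ℕ) < n → i ∉ A →
      ((M.ext A).po (M.copySet A) (M.apiVal A a a' πE) εe (Sum.inl i)
          = M.pse A a a' πE ε i)
      ∧ ((¬ ∃ k0 j, k0 ∈ A ∧ j ∉ A ∧ k0 ∈ M.pa j ∧ πE k0 j ∧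
            Relation.ReflTransGen (fun s t => s ∈ M.pa t ∧ πE s t ∧ t ∉ A) j i) →
          M.pse A a a' πE ε i = M.po A a' ε i) := by
  intro n
  induction n with
  | zero => intro i hi; omega
  | succ n ih =>
    intro i hi hiA
    have hin : ∀ m : Fin k, m ∈ M.pa i → (m : ℕ) < n := fun m hm =>
      lt_of_lt_of_le (M.pa_lt i m hm) (Nat.lt_succ_iff.mp hi)
    constructor
    · rw [GSCM.po, SCM.pse, SCM.ext_f_inl, hε, dif_neg hiA]
      congr 1
      funext m hm
      by_cases hA : m ∈ A
      · rw [dif_pos hA]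
        have hcs : (Sum.inr (m, i) : EIdx k) ∈ M.copySet A := ⟨(m, i), rfl, hA, hm⟩
        rw [dif_pos hcs]
        simp only [SCM.apiVal]
        by_cases hπmi : πE m i
        · erw [if_pos hπmi, if_pos hπmi, dif_pos hA]
        · erw [if_neg hπmi, if_neg hπmi, dif_pos hA, dif_pos hA]
      · rw [dif_neg hA, dif_neg (M.inl_not_copySet A m)]
        by_cases hπmi : πE m i
        · erw [if_pos hπmi, dif_neg hA]
          exact (ih m (hin m hm) hA).1
        · erw [if_neg hπmi, dif_neg hA, dif_neg hA]
          have hnt : ¬ ∃ k0 j, k0 ∈ A ∧ j ∉ A ∧ k0 ∈ M.pa j ∧ πE k0 j ∧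
              Relation.ReflTransGen (fun s t => s ∈ M.pa t ∧ πE s t ∧ t ∉ A) j m := by
            rintro ⟨k0, j, hk0, hjA, hkpj, hπkj, hchain⟩
            exact hec k0 j hk0 hjA hkpj hπkj
              ⟨m, i, hA, hiA, hm, hπmi, Relation.ReflTransGen.mono (fun s t h => ⟨h.1, h.2.2⟩) _ _ hchain⟩
          exact ((ih m (hin m hm) hA).1).trans ((ih m (hin m hm) hA).2 hnt)
    · intro hnt
      rw [SCM.pse, SCM.po, dif_neg hiA]
      congr 1
      funext m hm
      by_cases hA : m ∈ A
      · by_cases hπmi : πE m i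
        · exact absurd ⟨m, i, hA, hiA, hm, hπmi, Relation.ReflTransGen.refl⟩ hnt
        · rw [if_neg hπmi, dif_pos hA]
      · by_cases hπmi : πE m i
        · rw [if_pos hπmi, dif_neg hA, dif_neg hA]
          refine (ih m (hin m hm) hA).2 ?_
          rintro ⟨k0, j, hk0, hjA, hkpj, hπkj, hchain⟩
          exact hnt ⟨k0, j, hk0, hjA, hkpj, hπkj, hchain.tail ⟨hm, hπmi, hiA⟩⟩
        · rw [if_neg hπmi, dif_neg hA]

/-- **Equivalence of path-specific counterfactuals and extended-model counterfactuals**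
(Proposition 6): for a functional causal model `p` over a causal DAG `G(V)`, treatments
`A ⊆ V` with values `a, a'` and a set `π` of proper causal paths out of `A`, with `p^e` the
corresponding extended functional causal model over the extended DAG `G^e(V ∪ A^Ch)`:
(i) the observed distributions agree, `p(V) = p^e(V)`; and (ii) if `V(π, a, a')` is edge
consistent, then for every `Y ⊆ V \ A` the distribution of `Y(π, a, a')` under `p` equals
the distribution of `Y(a^π)` under `p^e`. -/
theorem pse_extended_model_equiv {k : ℕ} (F : FCM k)
    (A : Set (Fin k)) (a a' : ∀ j ∈ A, F.X j)
    (π : Set (List (Fin k))) (hπ : ∀ p ∈ π, F.toSCM.ProperPath A p) :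
    -- (i) the observed distributions agree
    (∀ v : ∀ i, F.X i,
      F.μ {ω | ∀ i, F.toSCM.po ∅ F.toSCM.noAssign (fun i => F.e i ω) i = v i}
        = F.μ {ω | ∀ i, (F.toSCM.ext A).po ∅ (F.toSCM.ext A).noAssign
            (F.extNoise A ω) (Sum.inl i) = v i}) ∧
    -- (ii) edge-consistent path-specific counterfactuals agree with the counterfactuals
    -- of the extended model under the intervention `a^π` on the copy vertices
    (F.toSCM.EdgeConsistent A (πEdges π) →
      ∀ Y : Set (Fin k), (∀ i ∈ Y, i ∉ A) →
      ∀ y : ∀ i ∈ Y, F.X i,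
        F.μ {ω | ∀ i (h : i ∈ Y),
            F.toSCM.pse A a a' (πEdges π) (fun i => F.e i ω) i = y i h}
          = F.μ {ω | ∀ i (h : i ∈ Y),
              (F.toSCM.ext A).po (F.toSCM.copySet A)
                (F.toSCM.apiVal A a a' (πEdges π)) (F.extNoise A ω) (Sum.inl i) = y i h}) := by
  constructor
  · intro v
    congr 1
    ext ω
    simp only [Set.mem_setOf_eq]
    apply forall_congr'
    intro i
    rw [SCM.ext_po_obs F.toSCM (fun j => F.e j ω) A (F.extNoise A ω) (fun _ => rfl)
      k i i.isLt]
    exact Iff.rfl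
  · intro hec Y hY y
    congr 1
    ext ω
    simp only [Set.mem_setOf_eq]
    apply forall_congr'
    intro i
    apply forall_congr'
    intro h
    rw [(SCM.ext_po_pse F.toSCM A a a' (πEdges π) (fun j => F.e j ω) (F.extNoise A ω)
      (fun _ => rfl) hec k i i.isLt (hY i h)).1]
    exact Iff.rfl
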